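/- arXiv:2108.13128 — 2 statements merged into one kernel-verified Lean document; each statement's English description precedes it below -/
import Mathlib

section
/- Let μ be a finite measure on a measurable space X, let C > 0, let (p_k) be a sequence of real numbers with p_k → ∞, and let g_k : X → ℝ^N be measurable functions with ∫_X ‖g_k‖^{p_k} dμ ≤ p_k · C for every k. If g_k(x) → g(x) for μ-almost every x ∈ X, then ‖g(x)‖ ≤ 1 for μ-almost every x ∈ X. -/
/-!
Normalise `F k = ‖g k‖^(p k) / p k`, whose integrals are bounded by `C`. By Fatou's lemma
`liminf F k` has finite integral, hence is finite almost everywhere. At a point where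
`g k x → G x` with `‖G x‖ > 1`, however, `F k x ≥ b ^ (p k) / p k` eventually for some `b > 1`,
and exponential growth beats the linear normalisation, so `F k x → ∞`.
-/

open MeasureTheory Filter Topology

theorem Real.tendsto_rpow_div_self_atTop {b : ℝ} (hb : 1 < b) :
    Tendsto (fun t : ℝ => b ^ t / t) atTop atTop := by
  have hlog : 0 < Real.log b := Real.log_pos hb
  have hexp : Tendsto (fun s : ℝ => Real.exp s / s) atTop atTop := by
    simpa using Real.tendsto_exp_div_pow_atTop 1
  refine ((hexp.comp (tendsto_id.const_mul_atTop hlog)).atTop_mul_const hlog).congr' ?_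
  filter_upwards [eventually_gt_atTop (0 : ℝ)] with t ht
  rw [Real.rpow_def_of_pos (zero_lt_one.trans hb), Function.comp_apply, id]
  field_simp

theorem ENNReal.tendsto_rpow_div_ofReal_nhds_top {a : ℕ → ENNReal} {c : ENNReal} {p : ℕ → ℝ}
    (ha : Tendsto a atTop (𝓝 c)) (hc : 1 < c) (hp : Tendsto p atTop atTop) :
    Tendsto (fun k => a k ^ p k / ENNReal.ofReal (p k)) atTop (𝓝 ⊤) := by
  obtain ⟨b, hb1, hbc⟩ : ∃ b : ℝ, 1 < b ∧ ENNReal.ofReal b < c := by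
    obtain ⟨d, -, hd1, hdc⟩ := ENNReal.lt_iff_exists_real_btwn.mp hc
    exact ⟨d, ENNReal.one_lt_ofReal.mp hd1, hdc⟩
  have hb0 : 0 < b := zero_lt_one.trans hb1
  have hlower : Tendsto (fun k => ENNReal.ofReal (b ^ p k / p k)) atTop (𝓝 ⊤) :=
    ENNReal.tendsto_ofReal_atTop.comp ((Real.tendsto_rpow_div_self_atTop hb1).comp hp)
  refine tendsto_nhds_top_mono hlower ?_
  filter_upwards [ha.eventually (eventually_gt_nhds hbc), hp.eventually_gt_atTop 0]
    with k hbk hpk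
  rw [ENNReal.ofReal_div_of_pos hpk, ← ENNReal.ofReal_rpow_of_pos hb0]
  gcongr

theorem MeasureTheory.ae_liminf_lt_top_of_lintegral_le {X : Type*} [MeasurableSpace X]
    {μ : Measure X} {F : ℕ → X → ENNReal} {c : ENNReal} (hF : ∀ k, Measurable (F k))
    (hint : ∀ᶠ k in atTop, ∫⁻ x, F k x ∂μ ≤ c) (hc : c ≠ ⊤) :
    ∀ᵐ x ∂μ, liminf (fun k => F k x) atTop < ⊤ := by
  refine ae_lt_top (.liminf hF) (ne_top_of_le_ne_top hc ?_)
  calc ∫⁻ x, liminf (fun k => F k x) atTop ∂μ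
      ≤ liminf (fun k => ∫⁻ x, F k x ∂μ) atTop := lintegral_liminf_le hF
    _ ≤ liminf (fun _ => c) atTop := liminf_le_liminf hint
    _ = c := liminf_const c

theorem statement3_general {X : Type*} [MeasurableSpace X] (μ : Measure X)
    {N : ℕ} (C : ℝ) (p : ℕ → ℝ) (hp : Tendsto p atTop atTop)
    (g : ℕ → X → EuclideanSpace ℝ (Fin N)) (hgmeas : ∀ k, Measurable (g k))
    (hint : ∀ k, ∫⁻ x, (‖g k x‖₊ : ENNReal) ^ (p k) ∂μ ≤ ENNReal.ofReal (p k * C))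
    (G : X → EuclideanSpace ℝ (Fin N))
    (hconv : ∀ᵐ x ∂μ, Tendsto (fun k => g k x) atTop (nhds (G x))) :
    ∀ᵐ x ∂μ, ‖G x‖ ≤ 1 := by
  set F : ℕ → X → ENNReal := fun k x => (‖g k x‖₊ : ENNReal) ^ p k / ENNReal.ofReal (p k)
  have hpow : ∀ k, Measurable fun x => (‖g k x‖₊ : ENNReal) ^ p k := fun k =>
    (hgmeas k).nnnorm.coe_nnreal_ennreal.pow_const _
  have hFmeas : ∀ k, Measurable (F k) := fun k => (hpow k).div_const _
  have hFint : ∀ᶠ k in atTop, ∫⁻ x, F k x ∂μ ≤ ENNReal.ofReal C := by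
    filter_upwards [hp.eventually_gt_atTop 0] with k hpk
    have hpk' : ENNReal.ofReal (p k) ≠ 0 := ENNReal.ofReal_ne_zero_iff.mpr hpk
    calc ∫⁻ x, F k x ∂μ = (∫⁻ x, (‖g k x‖₊ : ENNReal) ^ p k ∂μ) / ENNReal.ofReal (p k) := by
          simp only [F, div_eq_mul_inv]
          exact lintegral_mul_const _ (hpow k)
      _ ≤ ENNReal.ofReal (p k * C) / ENNReal.ofReal (p k) := by gcongr; exact hint k
      _ = ENNReal.ofReal C := by
          rw [ENNReal.ofReal_mul hpk.le]
          exact ((ENNReal.eq_div_iff hpk' ENNReal.ofReal_ne_top).mpr rfl).symm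
  filter_upwards [hconv, ae_liminf_lt_top_of_lintegral_le hFmeas hFint ENNReal.ofReal_ne_top]
    with x hx hfin
  by_contra! hG
  have hnorm : Tendsto (fun k => (‖g k x‖₊ : ENNReal)) atTop (𝓝 ‖G x‖₊) :=
    ENNReal.tendsto_coe.mpr hx.nnnorm
  have hG' : 1 < (‖G x‖₊ : ENNReal) := by exact_mod_cast hG
  have htop := ENNReal.tendsto_rpow_div_ofReal_nhds_top hnorm hG' hp
  exact hfin.ne htop.liminf_eq

/-- If `μ` is a finite measure, `p k → ∞`, `∫ ‖g k‖^(p k) dμ ≤ p k * C`, and `g k → g`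
`μ`-a.e., then `‖g x‖ ≤ 1` for `μ`-a.e. `x`. -/
theorem statement3 {X : Type*} [MeasurableSpace X] (μ : Measure X) [IsFiniteMeasure μ]
    {N : ℕ} (C : ℝ) (hC : 0 < C) (p : ℕ → ℝ) (hp : Tendsto p atTop atTop)
    (g : ℕ → X → EuclideanSpace ℝ (Fin N)) (hgmeas : ∀ k, Measurable (g k))
    (hint : ∀ k, ∫⁻ x, (‖g k x‖₊ : ENNReal) ^ (p k) ∂μ ≤ ENNReal.ofReal (p k * C))
    (G : X → EuclideanSpace ℝ (Fin N))
    (hconv : ∀ᵐ x ∂μ, Tendsto (fun k => g k x) atTop (nhds (G x))) :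
    ∀ᵐ x ∂μ, ‖G x‖ ≤ 1 :=
  statement3_general μ C p hp g hgmeas hint G hconv
end

section
/- Define K = {(a,b) ∈ ℝ² : |b − a| ≤ 1}, f = (0,1) ∈ ℝ², and u : [0,∞) → ℝ² by u(t) = (0, t) for 0 ≤ t ≤ 1 and u(t) = ((t−1)/2, (t−1)/2 + 1) for t ≥ 1. Then: (i) u(0) = (0,0); (ii) u is continuous on [0,∞); (iii) u(t) ∈ K for every t ≥ 0; (iv) for every t > 0 with t ≠ 1, u is differentiable at t and ⟨f − u'(t), w − u(t)⟩ ≤ 0 for every w ∈ K, where ⟨·,·⟩ is the Euclidean inner product on ℝ². -/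
/-!
`K` is the slab `|⟪n, w⟫| ≤ 1` with normal `n = (-1, 1)`. Until `t = 1` the solution moves freely
with velocity `f`, so `f - u' = 0`. At `t = 1` it hits the face `⟪n, w⟫ = 1` and then slides along
it with velocity `(1/2, 1/2)`, the projection of `f` onto the face; the residual `f - u' = n / 2`
is an outward normal of `K` at `u(t)`, which is exactly the variational inequality.
-/

open scoped RealInnerProductSpace

/-- The constraint set `K = {(a,b) ∈ ℝ² : |b - a| ≤ 1}`, viewed in `ℝ²` with the Euclidean
inner product. -/
noncomputable def sandpileK : Set (EuclideanSpace ℝ (Fin 2)) :=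
  {w | |w 1 - w 0| ≤ 1}

/-- The source `f = (0,1)`. -/
noncomputable def sandpileF : EuclideanSpace ℝ (Fin 2) := !₂[0, 1]

/-- The explicit solution of Example 1: `u(t) = (0,t)` for `0 ≤ t ≤ 1` and
`u(t) = ((t-1)/2, (t-1)/2 + 1)` for `t ≥ 1`. -/
noncomputable def sandpileU : ℝ → EuclideanSpace ℝ (Fin 2) := fun t =>
  if t ≤ 1 then !₂[0, t] else !₂[(t - 1) / 2, (t - 1) / 2 + 1]

theorem inner_smul_sub_nonpos_of_inner_le {E : Type*} [NormedAddCommGroup E]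
    [InnerProductSpace ℝ E] {n u w : E} {c r : ℝ} (hr : 0 ≤ r) (hu : ⟪n, u⟫ = c)
    (hw : ⟪n, w⟫ ≤ c) : ⟪r • n, w - u⟫ ≤ 0 := by
  rw [real_inner_smul_left, inner_sub_right, hu]
  exact mul_nonpos_of_nonneg_of_nonpos hr (sub_nonpos.mpr hw)

noncomputable def sandpileNormal : EuclideanSpace ℝ (Fin 2) := !₂[-1, 1]

noncomputable def sandpileDrift : EuclideanSpace ℝ (Fin 2) := !₂[1, 1]

theorem inner_sandpileNormal (w : EuclideanSpace ℝ (Fin 2)) :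
    ⟪sandpileNormal, w⟫ = w 1 - w 0 := by
  simp [sandpileNormal, PiLp.inner_apply, Fin.sum_univ_two]
  ring

theorem mem_sandpileK_iff {w : EuclideanSpace ℝ (Fin 2)} :
    w ∈ sandpileK ↔ |⟪sandpileNormal, w⟫| ≤ 1 := by
  rw [inner_sandpileNormal]
  rfl

theorem inner_sandpileNormal_sandpileF : ⟪sandpileNormal, sandpileF⟫ = 1 := by
  simp [inner_sandpileNormal, sandpileF]

theorem inner_sandpileNormal_sandpileDrift : ⟪sandpileNormal, sandpileDrift⟫ = 0 := by
  simp [inner_sandpileNormal, sandpileDrift]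

theorem sandpileF_sub_half_smul_sandpileDrift :
    sandpileF - (1 / 2 : ℝ) • sandpileDrift = (1 / 2 : ℝ) • sandpileNormal := by
  ext i
  fin_cases i <;> norm_num [sandpileF, sandpileDrift, sandpileNormal]

theorem sandpileU_eq :
    sandpileU = fun t =>
      if t ≤ 1 then t • sandpileF else sandpileF + ((t - 1) / 2) • sandpileDrift := by
  ext t i
  split_ifs <;> fin_cases i <;> simp [sandpileU, sandpileF, sandpileDrift, *]
  all_goals ring

theorem sandpileU_of_le {t : ℝ} (ht : t ≤ 1) : sandpileU t = t • sandpileF := by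
  simp [sandpileU_eq, ht]

theorem sandpileU_of_one_le {t : ℝ} (ht : 1 ≤ t) :
    sandpileU t = sandpileF + ((t - 1) / 2) • sandpileDrift := by
  rcases ht.eq_or_lt with rfl | ht
  · simp [sandpileU_eq]
  · simp [sandpileU_eq, not_le.mpr ht]

theorem continuous_sandpileU : Continuous sandpileU := by
  rw [sandpileU_eq]
  refine (continuous_id.smul continuous_const).if_le
    (continuous_const.add ((by fun_prop : Continuous fun t : ℝ => (t - 1) / 2).smul
      continuous_const)) continuous_id continuous_const ?_
  rintro _ rfl
  simp

theorem hasDerivAt_sandpileU_of_lt_one {t : ℝ} (ht : t < 1) :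
    HasDerivAt sandpileU sandpileF t := by
  have hline : HasDerivAt (fun s : ℝ => s • sandpileF) sandpileF t := by
    simpa using (hasDerivAt_id t).smul_const sandpileF
  refine hline.congr_of_eventuallyEq ?_
  filter_upwards [eventually_lt_nhds ht] with s hs using sandpileU_of_le hs.le

theorem hasDerivAt_sandpileU_of_one_lt {t : ℝ} (ht : 1 < t) :
    HasDerivAt sandpileU ((1 / 2 : ℝ) • sandpileDrift) t := by
  have hline : HasDerivAt (fun s : ℝ => sandpileF + ((s - 1) / 2) • sandpileDrift)
      ((1 / 2 : ℝ) • sandpileDrift) t := by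
    have := (((hasDerivAt_id t).sub_const 1).div_const 2).smul_const sandpileDrift
    simpa using this.const_add sandpileF
  refine hline.congr_of_eventuallyEq ?_
  filter_upwards [eventually_gt_nhds ht] with s hs using sandpileU_of_one_le hs.le

theorem inner_sandpileNormal_sandpileU_of_one_le {t : ℝ} (ht : 1 ≤ t) :
    ⟪sandpileNormal, sandpileU t⟫ = 1 := by
  rw [sandpileU_of_one_le ht, inner_add_right, real_inner_smul_right,
    inner_sandpileNormal_sandpileF, inner_sandpileNormal_sandpileDrift]
  ring

theorem sandpileU_mem_sandpileK {t : ℝ} (ht : 0 ≤ t) : sandpileU t ∈ sandpileK := by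
  rw [mem_sandpileK_iff]
  rcases le_total t 1 with ht1 | ht1
  · rw [sandpileU_of_le ht1, real_inner_smul_right, inner_sandpileNormal_sandpileF, mul_one,
      abs_of_nonneg ht]
    exact ht1
  · rw [inner_sandpileNormal_sandpileU_of_one_le ht1, abs_one]

theorem statement7 :
    sandpileU 0 = !₂[0, 0] ∧
    ContinuousOn sandpileU (Set.Ici (0 : ℝ)) ∧
    (∀ t : ℝ, 0 ≤ t → sandpileU t ∈ sandpileK) ∧
    (∀ t : ℝ, 0 < t → t ≠ 1 →
      DifferentiableAt ℝ sandpileU t ∧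
      ∀ w ∈ sandpileK, ⟪sandpileF - deriv sandpileU t, w - sandpileU t⟫ ≤ 0) := by
  refine ⟨?_, continuous_sandpileU.continuousOn, fun t => sandpileU_mem_sandpileK, ?_⟩
  · rw [sandpileU_of_le zero_le_one, zero_smul]
    ext i
    fin_cases i <;> rfl
  intro t _ ht1
  rcases ht1.lt_or_gt with ht1 | ht1
  · have hu := hasDerivAt_sandpileU_of_lt_one ht1
    refine ⟨hu.differentiableAt, fun w _ => ?_⟩
    rw [hu.deriv, sub_self, inner_zero_left]
  · have hu := hasDerivAt_sandpileU_of_one_lt ht1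
    refine ⟨hu.differentiableAt, fun w hw => ?_⟩
    rw [hu.deriv, sandpileF_sub_half_smul_sandpileDrift]
    exact inner_smul_sub_nonpos_of_inner_le (by norm_num)
      (inner_sandpileNormal_sandpileU_of_one_le ht1.le) (abs_le.mp (mem_sandpileK_iff.mp hw)).2
end
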